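/- Let n, d ≥ 1, let A ∈ ℝ^{n×d} have rows a_1, …, a_n ∈ ℝ^d which span ℝ^d, let c ∈ ℝ^n, and let R ≥ 0. If t* ∈ ℝ^n satisfies f(t*) ≤ f(t) for all t ∈ ℝ^n and max_{i∈[n]} |t*_i| ≤ R, then f(0) − f(t*) ≤ d·R²/2. -/

import Mathlib

open Matrix

/-- `Z(t) := ∑ i, exp (t i) • a_i a_iᵀ`, where `a_i` are the rows of `A`. -/
noncomputable def Zmat {n d : ℕ} (A : Matrix (Fin n) (Fin d) ℝ) (t : Fin n → ℝ) :
    Matrix (Fin d) (Fin d) ℝ :=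
  ∑ i, Real.exp (t i) • vecMulVec (A i) (A i)

/-- Barthe's objective `f(t) := -⟨c, t⟩ + log det Z(t)`. -/
noncomputable def barthe {n d : ℕ} (A : Matrix (Fin n) (Fin d) ℝ) (c : Fin n → ℝ)
    (t : Fin n → ℝ) : ℝ :=
  -(∑ i, c i * t i) + Real.log (Zmat A t).det

section helpers
variable {n d : ℕ}

lemma vecMulVec_mulVec' (u v x : Fin d → ℝ) : vecMulVec u v *ᵥ x = (v ⬝ᵥ x) • u := by
  funext j
  simp only [mulVec, vecMulVec_apply, dotProduct, Pi.smul_apply, smul_eq_mul, Finset.sum_mul]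
  exact Finset.sum_congr rfl fun k _ => by ring

lemma sum_mulVec' {ι : Type*} (s : Finset ι) (M : ι → Matrix (Fin d) (Fin d) ℝ) (x : Fin d → ℝ) :
    (∑ i ∈ s, M i) *ᵥ x = ∑ i ∈ s, (M i *ᵥ x) := by
  funext j
  simp only [mulVec, dotProduct, Matrix.sum_apply, Finset.sum_apply, Finset.sum_mul]
  exact Finset.sum_comm

/-- weighted sum of rank-one matrices -/
noncomputable def Wsum (A : Matrix (Fin n) (Fin d) ℝ) (w : Fin n → ℝ) :
    Matrix (Fin d) (Fin d) ℝ :=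
  ∑ i, w i • vecMulVec (A i) (A i)

lemma Wsum_apply (A : Matrix (Fin n) (Fin d) ℝ) (w : Fin n → ℝ) (j k : Fin d) :
    Wsum A w j k = ∑ i, w i * (A i j * A i k) := by
  simp [Wsum, Matrix.sum_apply, vecMulVec_apply, mul_assoc]

lemma Wsum_isHermitian (A : Matrix (Fin n) (Fin d) ℝ) (w : Fin n → ℝ) :
    (Wsum A w).IsHermitian := by
  unfold Matrix.IsHermitian
  ext j k
  simp only [conjTranspose_apply, Wsum_apply, star_trivial]
  exact Finset.sum_congr rfl fun i _ => by ring

lemma dot_Wsum (A : Matrix (Fin n) (Fin d) ℝ) (w : Fin n → ℝ) (x : Fin d → ℝ) :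
    x ⬝ᵥ (Wsum A w *ᵥ x) = ∑ i, w i * (A i ⬝ᵥ x) ^ 2 := by
  rw [Wsum, sum_mulVec']
  have h1 : ∀ i : Fin n, (w i • vecMulVec (A i) (A i)) *ᵥ x = (w i * (A i ⬝ᵥ x)) • A i := by
    intro i
    rw [smul_mulVec, vecMulVec_mulVec', smul_smul]
  simp only [h1]
  simp only [dotProduct, Finset.sum_apply, Pi.smul_apply, smul_eq_mul, Finset.mul_sum]
  rw [Finset.sum_comm]
  refine Finset.sum_congr rfl fun i _ => ?_
  simp only [pow_two, dotProduct, Finset.mul_sum, Finset.sum_mul]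
  refine Finset.sum_congr rfl fun j _ => Finset.sum_congr rfl fun k _ => by ring

lemma Wsum_posSemidef (A : Matrix (Fin n) (Fin d) ℝ) {w : Fin n → ℝ} (hw : ∀ i, 0 ≤ w i) :
    (Wsum A w).PosSemidef := by
  refine posSemidef_iff_dotProduct_mulVec.mpr ⟨Wsum_isHermitian A w, fun x => ?_⟩
  rw [star_trivial, dot_Wsum]
  exact Finset.sum_nonneg fun i _ => mul_nonneg (hw i) (sq_nonneg _)

lemma Wsum_add (A : Matrix (Fin n) (Fin d) ℝ) (w w' : Fin n → ℝ) :
    Wsum A (w + w') = Wsum A w + Wsum A w' := by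
  simp only [Wsum, Pi.add_apply, add_smul, Finset.sum_add_distrib]

lemma Wsum_smul (A : Matrix (Fin n) (Fin d) ℝ) (c : ℝ) (w : Fin n → ℝ) :
    Wsum A (c • w) = c • Wsum A w := by
  simp only [Wsum, Pi.smul_apply, smul_eq_mul, Finset.smul_sum, smul_smul]

lemma Wsum_congr (A : Matrix (Fin n) (Fin d) ℝ) {w w' : Fin n → ℝ} (h : ∀ i, w i = w' i) :
    Wsum A w = Wsum A w' := by
  unfold Wsum; exact Finset.sum_congr rfl fun i _ => by rw [h i]

end helpers

section posdef
variable {n d : ℕ}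

noncomputable def Zmat' (A : Matrix (Fin n) (Fin d) ℝ) (t : Fin n → ℝ) :
    Matrix (Fin d) (Fin d) ℝ :=
  ∑ i, Real.exp (t i) • vecMulVec (A i) (A i)

lemma Zmat'_eq_Wsum (A : Matrix (Fin n) (Fin d) ℝ) (t : Fin n → ℝ) :
    Zmat' A t = Wsum A fun i => Real.exp (t i) := rfl

lemma Zmat'_posDef (A : Matrix (Fin n) (Fin d) ℝ)
    (hspan : Submodule.span ℝ (Set.range fun i => A i) = ⊤) (t : Fin n → ℝ) :
    (Zmat' A t).PosDef := by
  rw [Zmat'_eq_Wsum]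
  refine posDef_iff_dotProduct_mulVec.mpr ⟨Wsum_isHermitian A _, fun x hx => ?_⟩
  rw [star_trivial, dot_Wsum]
  -- there exists i with A i ⬝ᵥ x ≠ 0
  have hex : ∃ i, A i ⬝ᵥ x ≠ 0 := by
    by_contra hcon
    push_neg at hcon
    let f : (Fin d → ℝ) →ₗ[ℝ] ℝ :=
      { toFun := fun y => y ⬝ᵥ x
        map_add' := fun a b => add_dotProduct a b x
        map_smul' := fun r a => smul_dotProduct r a x }
    have hle : Submodule.span ℝ (Set.range fun i => A i) ≤ LinearMap.ker f := by
      rw [Submodule.span_le]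
      rintro y ⟨i, rfl⟩
      exact hcon i
    rw [hspan, top_le_iff] at hle
    have hxx : x ⬝ᵥ x = 0 := by
      have := hle ▸ Submodule.mem_top (x := x)
      simpa [f] using (LinearMap.mem_ker.mp (by rw [hle]; trivial) : f x = 0)
    exact hx (by rwa [dotProduct_self_eq_zero] at hxx)
  obtain ⟨i0, hi0⟩ := hex
  refine Finset.sum_pos' (fun i _ => mul_nonneg (Real.exp_pos _).le (sq_nonneg _)) ⟨i0, Finset.mem_univ _, ?_⟩
  exact mul_pos (Real.exp_pos _) (lt_of_le_of_ne (sq_nonneg _) (Ne.symm (pow_ne_zero 2 hi0)))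

end posdef

section tracelog
variable {d : ℕ}

lemma trace_posSemidef_nonneg {M : Matrix (Fin d) (Fin d) ℝ} (hM : M.PosSemidef) :
    0 ≤ M.trace := by
  refine Finset.sum_nonneg fun i _ => ?_
  have := (posSemidef_iff_dotProduct_mulVec.mp hM).2 (Pi.single i 1)
  simpa using this

open scoped MatrixOrder in
lemma trace_inv_mul_nonneg {Z M : Matrix (Fin d) (Fin d) ℝ} (hZ : Z.PosDef)
    (hM : M.PosSemidef) : 0 ≤ (Z⁻¹ * M).trace := by
  have hS := (CFC.sqrt_nonneg M).posSemidef
  have hrw : Z⁻¹ * M = Z⁻¹ * CFC.sqrt M * CFC.sqrt M := by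
    rw [Matrix.mul_assoc, CFC.sqrt_mul_sqrt_self M hM.nonneg]
  rw [hrw, Matrix.trace_mul_cycle]
  have hpsd : (CFC.sqrt M * (Z⁻¹ * CFC.sqrt M)).PosSemidef := by
    have := (hZ.inv.posSemidef).conjTranspose_mul_mul_same (CFC.sqrt M)
    rwa [hS.isHermitian.eq, Matrix.mul_assoc] at this
  exact le_trans (trace_posSemidef_nonneg hpsd) (le_of_eq (by rw [Matrix.mul_assoc]))

lemma posDef_conj {Z S : Matrix (Fin d) (Fin d) ℝ} (hZ : Z.PosDef) (hS : S.IsHermitian)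
    (hdet : IsUnit S.det) : (S * Z * S).PosDef := by
  have hST : Sᵀ = S := by
    ext j k
    have := congrFun (congrFun hS j) k
    simpa using this
  refine posDef_iff_dotProduct_mulVec.mpr ⟨?_, fun x hx => ?_⟩
  · show (S * Z * S)ᴴ = S * Z * S
    rw [conjTranspose_mul, conjTranspose_mul, hS.eq, hZ.1.eq, Matrix.mul_assoc]
  · have h1 : (S * Z * S) *ᵥ x = S *ᵥ (Z *ᵥ (S *ᵥ x)) := by
      rw [← mulVec_mulVec, ← mulVec_mulVec]
    have hx' : S *ᵥ x ≠ 0 := by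
      intro h0
      have hinv : S⁻¹ *ᵥ (S *ᵥ x) = x := by
        rw [mulVec_mulVec, Matrix.nonsing_inv_mul S hdet, one_mulVec]
      rw [h0, mulVec_zero] at hinv
      exact hx hinv.symm
    have key := (posDef_iff_dotProduct_mulVec.mp hZ).2 hx'
    rw [star_trivial] at key
    have h2 : Matrix.vecMul x S = S *ᵥ x := by rw [← hST, vecMul_transpose, hST]
    show (0:ℝ) < star x ⬝ᵥ ((S * Z * S) *ᵥ x)
    rw [star_trivial, h1, dotProduct_mulVec, h2]
    exact key

lemma trace_eq_sum_eig {P : Matrix (Fin d) (Fin d) ℝ} (hP : P.IsHermitian) :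
    P.trace = ∑ i, hP.eigenvalues i := by
  conv_lhs => rw [hP.spectral_theorem, Unitary.conjStarAlgAut_apply]
  rw [Matrix.trace_mul_cycle]
  have hu : (star (hP.eigenvectorUnitary : Matrix (Fin d) (Fin d) ℝ)) *
      (hP.eigenvectorUnitary : Matrix (Fin d) (Fin d) ℝ) = 1 :=
    Matrix.mem_unitaryGroup_iff'.mp (hP.eigenvectorUnitary).2
  rw [hu, Matrix.one_mul, Matrix.trace_diagonal]
  simp [RCLike.ofReal_real_eq_id]

open scoped MatrixOrder in
lemma logdet_sub_le {Z B : Matrix (Fin d) (Fin d) ℝ} (hZ : Z.PosDef) (hB : B.PosDef) :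
    Real.log B.det - Real.log Z.det ≤ (Z⁻¹ * B).trace - d := by
  set S := CFC.sqrt Z with hSdef
  have hSS : S * S = Z := CFC.sqrt_mul_sqrt_self Z hZ.posSemidef.nonneg
  have hdetS : S.det * S.det = Z.det := by rw [← Matrix.det_mul, hSS]
  have hdetS_ne : S.det ≠ 0 := fun h => by
    have := hdetS; rw [h, mul_zero] at this; exact (ne_of_gt hZ.det_pos) this.symm
  have hT_herm : (S⁻¹).IsHermitian := ((CFC.sqrt_nonneg Z).posSemidef.isHermitian).inv
  have hdetT : IsUnit (S⁻¹).det :=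
    Matrix.isUnit_nonsing_inv_det S (isUnit_iff_ne_zero.mpr hdetS_ne)

  have hP : (S⁻¹ * B * S⁻¹).PosDef := posDef_conj hB hT_herm hdetT
  set P := S⁻¹ * B * S⁻¹ with hPdef
  -- det P = det B / det Z
  have hdetP : P.det = B.det / Z.det := by
    rw [hPdef, Matrix.det_mul, Matrix.det_mul, Matrix.det_nonsing_inv, ← hdetS]
    rw [Ring.inverse_eq_inv']; field_simp
  -- trace P = trace (Z⁻¹ * B)
  have htraceP : P.trace = (Z⁻¹ * B).trace := by
    rw [hPdef, Matrix.trace_mul_cycle, ← Matrix.mul_inv_rev, hSS]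
  -- eigenvalue bound
  have heig := hP.eigenvalues_pos
  have hlogdet : Real.log P.det = ∑ i, Real.log (hP.1.eigenvalues i) := by
    have hPd : P.det = ∏ i, hP.1.eigenvalues i := by
      rw [hP.1.det_eq_prod_eigenvalues]
      simp [RCLike.ofReal_real_eq_id]
    rw [hPd, Real.log_prod (fun i _ => ne_of_gt (heig i))]
  have hsum : ∑ i, Real.log (hP.1.eigenvalues i) ≤ ∑ i, (hP.1.eigenvalues i - 1) :=
    Finset.sum_le_sum fun i _ => Real.log_le_sub_one_of_pos (heig i)
  have htr : ∑ i, (hP.1.eigenvalues i - 1) = P.trace - d := by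
    rw [Finset.sum_sub_distrib, trace_eq_sum_eig hP.1]
    simp
  have : Real.log P.det ≤ P.trace - d := by
    rw [hlogdet]; exact hsum.trans (le_of_eq htr)
  rw [hdetP, Real.log_div (ne_of_gt hB.det_pos) (ne_of_gt hZ.det_pos), htraceP] at this
  exact this

end tracelog

section scalar

lemma sinh_le_mul_cosh {y : ℝ} (hy : 0 ≤ y) : Real.sinh y ≤ y * Real.cosh y := by
  have hder : ∀ z : ℝ, HasDerivAt (fun w => w * Real.cosh w - Real.sinh w)
      (z * Real.sinh z) z := by
    intro z
    have h1 : HasDerivAt (fun w : ℝ => w * Real.cosh w)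
        (1 * Real.cosh z + z * Real.sinh z) z :=
      (hasDerivAt_id z).mul (Real.hasDerivAt_cosh z)
    have h2 : HasDerivAt Real.sinh (Real.cosh z) z := Real.hasDerivAt_sinh z
    have h3 : HasDerivAt (fun w : ℝ => w * Real.cosh w - Real.sinh w)
        (1 * Real.cosh z + z * Real.sinh z - Real.cosh z) z := h1.sub h2
    convert h3 using 1
    ring
  have hmono : Monotone (fun w : ℝ => w * Real.cosh w - Real.sinh w) := by
    apply monotone_of_deriv_nonneg
    · exact fun z => (hder z).differentiableAt
    · intro z
      rw [(hder z).deriv]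
      rcases le_or_gt 0 z with hz | hz
      · exact mul_nonneg hz (by rwa [Real.sinh_nonneg_iff])
      · have hs : Real.sinh z ≤ 0 := by
          have := Real.sinh_le_sinh.mpr hz.le
          simpa using this
        nlinarith
  have h0 := hmono hy
  simpa using h0

lemma two_cosh_sub_two_le (x : ℝ) : 2 * (Real.cosh x - 1) ≤ x ^ 2 * Real.cosh x := by
  rw [← Real.cosh_abs x, ← sq_abs x]
  set y : ℝ := |x| / 2 with hy
  have hy0 : 0 ≤ y := by positivity
  have habs : |x| = 2 * y := by rw [hy]; ring
  rw [habs]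
  have hcosh2 : Real.cosh (2*y) = 2 * Real.sinh y ^ 2 + 1 := by
    rw [Real.cosh_two_mul, Real.cosh_sq]; ring
  have hcoshsq : Real.cosh y ^ 2 = (Real.cosh (2*y) + 1) / 2 := by
    rw [Real.cosh_two_mul, Real.cosh_sq]; ring
  have hs := sinh_le_mul_cosh hy0
  have h1 : 0 ≤ Real.sinh y := Real.sinh_nonneg_iff.mpr hy0
  have hsq : Real.sinh y ^ 2 ≤ y ^ 2 * Real.cosh y ^ 2 := by
    nlinarith [hs, h1, Real.cosh_pos y]
  have hone : 1 ≤ Real.cosh (2*y) := Real.one_le_cosh _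
  nlinarith [hsq, hcosh2, hcoshsq, hone, sq_nonneg y,
    mul_nonneg (sq_nonneg y) (by linarith : (0:ℝ) ≤ Real.cosh (2*y) - 1)]

end scalar

section discrete

lemma discrete_bound (φ : ℝ → ℝ) (ε : ℝ) (N : ℕ) (hN : 0 < N)
    (hsec : ∀ s : ℝ, φ (s + (N:ℝ)⁻¹) + φ (s - (N:ℝ)⁻¹) - 2 * φ s ≤ ε)
    (hmin : ∀ s, φ 1 ≤ φ s) :
    φ 0 - φ 1 ≤ ε * ((N:ℝ) * ((N:ℝ) + 1)) / 2 := by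
  set h : ℝ := (N:ℝ)⁻¹ with hhdef
  have hNR : (0:ℝ) < N := Nat.cast_pos.mpr hN
  have hNh : (N:ℝ) * h = 1 := mul_inv_cancel₀ (ne_of_gt hNR)
  set D : ℕ → ℝ := fun k => φ (((k:ℝ)+1) * h) - φ ((k:ℝ) * h) with hD
  have hstep : ∀ k : ℕ, D (k+1) - D k ≤ ε := by
    intro k
    have hsec' := hsec (((k:ℝ)+1) * h)
    have e1 : ((k:ℝ)+1)*h + h = (((k:ℝ)+1)+1)*h := by ring
    have e2 : ((k:ℝ)+1)*h - h = (k:ℝ)*h := by ring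
    rw [e1, e2] at hsec'
    simp only [hD]
    push_cast
    linarith
  have hDN : 0 ≤ D N := by
    have hm := hmin (((N:ℝ)+1) * h)
    simp only [hD]
    rw [hNh]
    linarith
  have hlow : ∀ j, j ≤ N → -(D (N - j)) ≤ (j:ℝ) * ε := by
    intro j
    induction j with
    | zero => intro _; simpa using hDN
    | succ j ih =>
        intro hj
        have hj' : j ≤ N := Nat.le_of_succ_le hj
        have ihj := ih hj'
        have hk := hstep (N - (j+1))
        have e : N - (j+1) + 1 = N - j := by omega
        rw [e] at hk
        push_cast
        push_cast at ihj
        linarith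
  have hk_bound : ∀ k, k < N → -(D k) ≤ ((N:ℝ) - (k:ℝ)) * ε := by
    intro k hk
    have hb := hlow (N - k) (Nat.sub_le _ _)
    have e : N - (N - k) = k := by omega
    rw [e] at hb
    have ecast : ((N - k : ℕ) : ℝ) = (N:ℝ) - (k:ℝ) := by
      rw [Nat.cast_sub hk.le]
    rw [ecast] at hb
    exact hb
  have htel : ∑ k ∈ Finset.range N, D k = φ ((N:ℝ) * h) - φ 0 := by
    have hts := Finset.sum_range_sub (fun k : ℕ => φ ((k:ℝ) * h)) N
    simp only [Nat.cast_zero, zero_mul, Nat.cast_add, Nat.cast_one] at hts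
    rw [← hts]
  have hsum_id : (∑ k ∈ Finset.range N, (k:ℝ)) = (N:ℝ) * ((N:ℝ) - 1) / 2 := by
    have hg := congrArg (Nat.cast : ℕ → ℝ) (Finset.sum_range_id_mul_two N)
    push_cast [Nat.cast_sub hN] at hg
    linarith
  have hphi1 : φ ((N:ℝ) * h) = φ 1 := by rw [hNh]
  have hstart : φ 0 - φ 1 = ∑ k ∈ Finset.range N, -(D k) := by
    rw [Finset.sum_neg_distrib, htel, hphi1]
    ring
  calc φ 0 - φ 1 = ∑ k ∈ Finset.range N, -(D k) := hstart
    _ ≤ ∑ k ∈ Finset.range N, ((N:ℝ) - (k:ℝ)) * ε :=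
        Finset.sum_le_sum fun k hk => hk_bound k (Finset.mem_range.mp hk)
    _ = (∑ k ∈ Finset.range N, ((N:ℝ) - (k:ℝ))) * ε := by rw [Finset.sum_mul]
    _ = ε * ((N:ℝ) * ((N:ℝ) + 1)) / 2 := by
        rw [Finset.sum_sub_distrib, hsum_id]
        simp only [Finset.sum_const, Finset.card_range, nsmul_eq_mul]
        ring

end discrete

section keylemma
variable {n d : ℕ}

lemma Zmat_eq_Wsum' (A : Matrix (Fin n) (Fin d) ℝ) (t : Fin n → ℝ) :
    Zmat A t = Wsum A fun i => Real.exp (t i) := rfl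

lemma Zmat_posDef (A : Matrix (Fin n) (Fin d) ℝ)
    (hspan : Submodule.span ℝ (Set.range fun i => A i) = ⊤) (t : Fin n → ℝ) :
    (Zmat A t).PosDef :=
  Zmat'_posDef A hspan t

lemma key_secdiff (A : Matrix (Fin n) (Fin d) ℝ) (c : Fin n → ℝ)
    (hspan : Submodule.span ℝ (Set.range fun i => A i) = ⊤)
    {R : ℝ} (hR : 0 ≤ R) (tstar : Fin n → ℝ) (hbound : ∀ i, |tstar i| ≤ R)
    (s h : ℝ) :
    barthe A c ((s+h) • tstar) + barthe A c ((s-h) • tstar) - 2 * barthe A c (s • tstar)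
      ≤ 2 * d * (Real.cosh (h * R) - 1) := by
  set t := tstar with ht
  set Zs := Zmat A (s • t) with hZsdef
  set Zu := Zmat A ((s+h) • t) with hZudef
  set Zv := Zmat A ((s-h) • t) with hZvdef
  have hZs : Zs.PosDef := Zmat_posDef A hspan _
  have hZu : Zu.PosDef := Zmat_posDef A hspan _
  have hZv : Zv.PosDef := Zmat_posDef A hspan _
  have hlog1 : Real.log Zu.det - Real.log Zs.det ≤ (Zs⁻¹ * Zu).trace - d :=
    logdet_sub_le hZs hZu
  have hlog2 : Real.log Zv.det - Real.log Zs.det ≤ (Zs⁻¹ * Zv).trace - d :=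
    logdet_sub_le hZs hZv
  -- linear parts cancel
  have hlin : (∑ i, c i * ((s+h) • t) i) + (∑ i, c i * ((s-h) • t) i)
      - 2 * (∑ i, c i * (s • t) i) = 0 := by
    rw [Finset.mul_sum, ← Finset.sum_add_distrib, ← Finset.sum_sub_distrib]
    refine Finset.sum_eq_zero fun i _ => ?_
    simp only [Pi.smul_apply, smul_eq_mul]
    ring
  -- sum of the two shifted matrices
  have hsum : Zu + Zv = Wsum A (fun i => Real.exp (s * t i) * (2 * Real.cosh (h * t i))) := by
    rw [hZudef, hZvdef, Zmat_eq_Wsum', Zmat_eq_Wsum', ← Wsum_add]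
    refine Wsum_congr A fun i => ?_
    simp only [Pi.add_apply, Pi.smul_apply, smul_eq_mul]
    rw [show (s+h) * t i = s * t i + h * t i from by ring,
        show (s-h) * t i = s * t i + -(h * t i) from by ring,
        Real.exp_add, Real.exp_add, Real.cosh_eq]
    ring
  -- remainder matrix is psd
  have hM : (Wsum A (fun i => Real.exp (s * t i)
      * (2 * Real.cosh (h * R) - 2 * Real.cosh (h * t i)))).PosSemidef := by
    refine Wsum_posSemidef A fun i => mul_nonneg (Real.exp_pos _).le ?_
    have hcc : Real.cosh (h * t i) ≤ Real.cosh (h * R) := by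
      rw [Real.cosh_le_cosh, abs_mul, abs_mul]
      exact mul_le_mul_of_nonneg_left (by rw [abs_of_nonneg hR]; exact hbound i) (abs_nonneg h)
    linarith
  -- decomposition
  have hdecomp : (2 * Real.cosh (h * R)) • Zs = (Zu + Zv)
      + Wsum A (fun i => Real.exp (s * t i)
          * (2 * Real.cosh (h * R) - 2 * Real.cosh (h * t i))) := by
    rw [hsum, hZsdef, Zmat_eq_Wsum', ← Wsum_smul, ← Wsum_add]
    refine Wsum_congr A fun i => ?_
    simp only [Pi.smul_apply, Pi.add_apply, smul_eq_mul]
    ring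
  have hZsdet : IsUnit Zs.det := isUnit_iff_ne_zero.mpr (ne_of_gt hZs.det_pos)
  have htr1 : (Zs⁻¹ * ((2 * Real.cosh (h * R)) • Zs)).trace = 2 * Real.cosh (h * R) * d := by
    rw [Matrix.mul_smul, Matrix.trace_smul, Matrix.nonsing_inv_mul _ hZsdet, Matrix.trace_one]
    simp [Fintype.card_fin]
  have htr0 : 0 ≤ (Zs⁻¹ * Wsum A (fun i => Real.exp (s * t i)
      * (2 * Real.cosh (h * R) - 2 * Real.cosh (h * t i)))).trace :=
    trace_inv_mul_nonneg hZs hM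
  have hsplit : (Zs⁻¹ * ((2 * Real.cosh (h * R)) • Zs)).trace
      = (Zs⁻¹ * (Zu + Zv)).trace + (Zs⁻¹ * Wsum A (fun i => Real.exp (s * t i)
          * (2 * Real.cosh (h * R) - 2 * Real.cosh (h * t i)))).trace := by
    rw [hdecomp, Matrix.mul_add, Matrix.trace_add]
  have htr2 : (Zs⁻¹ * (Zu + Zv)).trace ≤ 2 * Real.cosh (h * R) * d := by
    rw [← htr1, hsplit]
    linarith
  have htradd : (Zs⁻¹ * (Zu + Zv)).trace = (Zs⁻¹ * Zu).trace + (Zs⁻¹ * Zv).trace := by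
    rw [Matrix.mul_add, Matrix.trace_add]
  -- put it together
  simp only [barthe]
  rw [← hZsdef, ← hZudef, ← hZvdef]
  have : Real.log Zu.det + Real.log Zv.det - 2 * Real.log Zs.det
      ≤ 2 * Real.cosh (h * R) * d - 2 * d := by
    rw [htradd] at htr2
    linarith
  linarith [hlin, this]

end keylemma


/-- initial error bound. If `t*` minimizes Barthe's objective and
`‖t*‖∞ ≤ R`, then `f(0) − f(t*) ≤ d·R²/2`. -/
theorem stmt_9 (n d : ℕ) (hn : 1 ≤ n) (hd : 1 ≤ d)
    (A : Matrix (Fin n) (Fin d) ℝ)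
    (hspan : Submodule.span ℝ (Set.range fun i => A i) = ⊤)
    (c : Fin n → ℝ) (R : ℝ) (hR : 0 ≤ R)
    (tstar : Fin n → ℝ)
    (hmin : ∀ t, barthe A c tstar ≤ barthe A c t)
    (hbound : ∀ i, |tstar i| ≤ R) :
    barthe A c 0 - barthe A c tstar ≤ d * R ^ 2 / 2 := by
  set φ : ℝ → ℝ := fun s => barthe A c (s • tstar) with hφ
  have hφ0 : φ 0 = barthe A c 0 := by rw [hφ]; simp
  have hφ1 : φ 1 = barthe A c tstar := by rw [hφ]; simp
  have hmin' : ∀ s, φ 1 ≤ φ s := fun s => by rw [hφ1]; exact hmin _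
  have hkey : ∀ N : ℕ, 1 ≤ N → barthe A c 0 - barthe A c tstar
      ≤ (d:ℝ) * R ^ 2 * Real.cosh ((N:ℝ)⁻¹ * R) * (((N:ℝ) + 1) / (2 * (N:ℝ))) := by
    intro N hN
    have hN0 : 0 < N := hN
    have hNR : (0:ℝ) < N := Nat.cast_pos.mpr hN0
    have hsec : ∀ s : ℝ, φ (s + (N:ℝ)⁻¹) + φ (s - (N:ℝ)⁻¹) - 2 * φ s
        ≤ 2 * d * (Real.cosh ((N:ℝ)⁻¹ * R) - 1) := fun s =>
      key_secdiff A c hspan hR tstar hbound s ((N:ℝ)⁻¹)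
    have hdb := discrete_bound φ _ N hN0 hsec hmin'
    rw [hφ0, hφ1] at hdb
    refine le_trans hdb ?_
    set x : ℝ := (N:ℝ)⁻¹ * R with hx
    have hc := two_cosh_sub_two_le x
    have hfac : (0:ℝ) ≤ (d:ℝ) * ((N:ℝ) * ((N:ℝ) + 1)) / 2 := by positivity
    calc 2 * (d:ℝ) * (Real.cosh x - 1) * ((N:ℝ) * ((N:ℝ) + 1)) / 2
        = (2 * (Real.cosh x - 1)) * ((d:ℝ) * ((N:ℝ) * ((N:ℝ) + 1)) / 2) := by ring
      _ ≤ (x ^ 2 * Real.cosh x) * ((d:ℝ) * ((N:ℝ) * ((N:ℝ) + 1)) / 2) :=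
          mul_le_mul_of_nonneg_right hc hfac
      _ = (d:ℝ) * R ^ 2 * Real.cosh x * (((N:ℝ) + 1) / (2 * (N:ℝ))) := by
          rw [hx]
          field_simp
  have hten : Filter.Tendsto
      (fun N : ℕ => (d:ℝ) * R ^ 2 * Real.cosh ((N:ℝ)⁻¹ * R) * (((N:ℝ) + 1) / (2 * (N:ℝ))))
      Filter.atTop (nhds ((d:ℝ) * R ^ 2 / 2)) := by
    have h1 : Filter.Tendsto (fun N : ℕ => ((N:ℝ))⁻¹) Filter.atTop (nhds 0) :=
      tendsto_inv_atTop_nhds_zero_nat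
    have h2 : Filter.Tendsto (fun N : ℕ => (N:ℝ)⁻¹ * R) Filter.atTop (nhds 0) := by
      simpa using h1.mul_const R
    have h3 : Filter.Tendsto (fun N : ℕ => Real.cosh ((N:ℝ)⁻¹ * R)) Filter.atTop (nhds 1) := by
      have := (Real.continuous_cosh.tendsto 0).comp h2
      simpa [Function.comp_def] using this
    have h4 : Filter.Tendsto (fun N : ℕ => ((N:ℝ) + 1) / (2 * (N:ℝ))) Filter.atTop
        (nhds (1/2)) := by
      have heq : (fun N : ℕ => ((N:ℝ) + 1) / (2 * (N:ℝ))) =ᶠ[Filter.atTop]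
          fun N : ℕ => 1/2 + (N:ℝ)⁻¹ / 2 := by
        filter_upwards [Filter.eventually_gt_atTop 0] with N hN
        have hNe : (N:ℝ) ≠ 0 := (Nat.cast_pos.mpr hN).ne'
        rw [div_eq_iff (mul_ne_zero two_ne_zero hNe)]
        field_simp
      rw [Filter.tendsto_congr' heq]
      have hconst : Filter.Tendsto (fun _ : ℕ => (1:ℝ)/2) Filter.atTop (nhds (1/2)) :=
        tendsto_const_nhds
      have := hconst.add (h1.div_const 2)
      simpa using this
    have h5 := (h3.const_mul ((d:ℝ) * R ^ 2)).mul h4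
    have : (d:ℝ) * R ^ 2 * 1 * (1/2) = (d:ℝ) * R ^ 2 / 2 := by ring
    rw [this] at h5
    exact h5
  exact ge_of_tendsto hten (Filter.eventually_atTop.mpr ⟨1, fun N hN => hkey N hN⟩)
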